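/- Let $1\le p<\infty$, $(w,v)\in A_p^{+,d}(\mathcal{R})$ on $\mathbb{R}^n$, and $\mu>0$. Let $E$ be measurable with $0<|E|<\infty$ and let $\{Q_j\}_{j\in\Gamma_\mu}$ be a pairwise disjoint family of dyadic cubes satisfying $\mu < |E\cap Q_j^+|/|Q_j| \le 2\mu$ for every $j$. Then $\sum_{j\in\Gamma_\mu} w(Q_j) \le 2^{n+p+2}[(w,v)]_{A_p^{+,d}(\mathcal{R})}^p \mu^{-p}\, v(E\cap \bigcup_{j\in\Gamma_\mu} Q_j^+)$. -/

import Mathlib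

open MeasureTheory Set ENNReal

noncomputable section

/-- The half-open cube `∏ᵢ [aᵢ, aᵢ + h)` in `ℝⁿ`. -/
def cube {n : ℕ} (a : Fin n → ℝ) (h : ℝ) : Set (Fin n → ℝ) :=
  Set.univ.pi fun i => Set.Ico (a i) (a i + h)

/-- The forward adjacent cube `Q⁺ = ∏ᵢ [aᵢ + h, aᵢ + 2h)`. -/
def cubePlus {n : ℕ} (a : Fin n → ℝ) (h : ℝ) : Set (Fin n → ℝ) :=
  Set.univ.pi fun i => Set.Ico (a i + h) (a i + 2 * h)

/-- The dyadic cube with corner `m * 2^k` and side `2^k`. -/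
def dyCube {n : ℕ} (k : ℤ) (m : Fin n → ℤ) : Set (Fin n → ℝ) :=
  cube (fun i => (m i : ℝ) * 2 ^ k) (2 ^ k)

/-- The forward adjacent cube of a dyadic cube. -/
def dyCubePlus {n : ℕ} (k : ℤ) (m : Fin n → ℤ) : Set (Fin n → ℝ) :=
  cubePlus (fun i => (m i : ℝ) * 2 ^ k) (2 ^ k)

/-- The dyadic one-sided maximal function of the characteristic function of `E`:
`M^{+,d}(χ_E)(x) = sup { |E ∩ Q⁺| / |Q| : Q dyadic cube containing x }`. -/
def Mplusd {n : ℕ} (E : Set (Fin n → ℝ)) (x : Fin n → ℝ) : ℝ≥0∞ :=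
  ⨆ (k : ℤ) (m : Fin n → ℤ) (_ : x ∈ dyCube k m),
    volume (E ∩ dyCubePlus k m) / volume (dyCube k m)

/-!
For each `j` let `F_j` be the part of `E ∩ Q_j⁺` covered by fewer than `2^(n+2)` of the cubes
`Q_i⁺ ⊆ Q_j⁺`. The cubes `Q_i` with `Q_i⁺ ⊆ Q_j⁺` are disjoint and lie in the double of `Q_j`, so
this covering number has integral at most `2μ·2ⁿ|Q_j|` over `E ∩ Q_j⁺`, and Chebyshev's inequality
gives `|F_j| > μ|Q_j|/2`. The `A_p^{+,d}` condition on `F_j ⊆ Q_j⁺` then yields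
`μᵖ w(Q_j) ≤ 2ᵖ Kᵖ v(F_j)`. Finally, dyadic cubes are nested or disjoint, so the `F_j` containing
a point all lie in the `Q_{j₀}⁺` of the largest one; hence at most `2^(n+2)` of the `F_j` overlap,
and `∑ v(F_j) ≤ 2^(n+2) v(E ∩ ⋃ Q_j⁺)`.
-/

namespace ENNReal

theorem rpow_mul_le_of_le_two_mul {p : ℝ} (hp : 0 < p) {μ r K a b : ℝ≥0∞} (hμ : μ ≤ 2 * r)
    (hr : r ≤ K * (a / b) ^ (1 / p)) : μ ^ p * b ≤ 2 ^ p * K ^ p * a := by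
  have h : μ ^ p ≤ 2 ^ p * K ^ p * (a / b) := by
    calc μ ^ p ≤ (2 * (K * (a / b) ^ (1 / p))) ^ p := by gcongr; exact hμ.trans (by gcongr)
      _ = 2 ^ p * K ^ p * (a / b) := by
        rw [mul_rpow_of_nonneg _ _ hp.le, mul_rpow_of_nonneg _ _ hp.le, ← rpow_mul,
          one_div_mul_cancel hp.ne', rpow_one, mul_assoc]
  exact mul_le_of_le_div (mul_div_assoc (2 ^ p * K ^ p) a b ▸ h)

end ENNReal

section MeasureLemmas

variable {α : Type*} [MeasurableSpace α] {ν : Measure α}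

theorem tsum_measure_le_of_pairwise_disjoint {ι : Type*} {Q : ι → Set α}
    (hQ : ∀ i, MeasurableSet (Q i)) (hdisj : Pairwise fun i j => Disjoint (Q i) (Q j))
    {s : Set ι} {S : Set α} (hS : ∀ i ∈ s, Q i ⊆ S) : ∑' i : s, ν (Q i) ≤ ν S :=
  (tsum_meas_le_meas_iUnion_of_disjoint ν (fun i : s => hQ i)
    fun _ _ hij => hdisj (Subtype.coe_injective.ne hij)).trans
    (measure_mono (iUnion_subset fun i => hS i i.2))

theorem tsum_setLIntegral_le_of_tsum_indicator_le {ι : Type*} [Countable ι] {F : ι → Set α}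
    {S : Set α} {v : α → ℝ≥0∞} (hv : AEMeasurable v (ν.restrict S))
    (hF : ∀ j, MeasurableSet (F j)) (hFS : ∀ j, F j ⊆ S) {T : ℝ≥0∞}
    (hover : ∀ x, ∑' j, (F j).indicator 1 x ≤ T) :
    ∑' j, ∫⁻ x in F j, v x ∂ν ≤ T * ∫⁻ x in S, v x ∂ν := by
  have hrestrict : ∀ j, ∫⁻ x in F j, v x ∂ν = ∫⁻ x in S, (F j).indicator v x ∂ν := fun j => by
    rw [lintegral_indicator (hF j), Measure.restrict_restrict (hF j), inter_eq_left.2 (hFS j)]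
  calc ∑' j, ∫⁻ x in F j, v x ∂ν
      = ∫⁻ x in S, (∑' j, (F j).indicator 1 x) * v x ∂ν := by
        simp_rw [hrestrict, ← ENNReal.tsum_mul_right, ← indicator_mul_left, Pi.one_apply,
          one_mul]
        exact (lintegral_tsum fun j => hv.indicator (hF j)).symm
    _ ≤ ∫⁻ x in S, T * v x ∂ν := lintegral_mono fun x => by gcongr; exact hover x
    _ = T * ∫⁻ x in S, v x ∂ν := lintegral_const_mul'' T hv

theorem lt_two_mul_measure_inter_setOf_lt {f : α → ℝ≥0∞} {A : Set α}
    (hf : AEMeasurable f (ν.restrict A)) {T c : ℝ≥0∞} (hT₀ : T ≠ 0) (hT : T ≠ ∞)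
    (hc : c < ν A) (hint : 2 * ∫⁻ x in A, f x ∂ν ≤ T * c) :
    c < 2 * ν (A ∩ {x | f x < T}) := by
  have hbad : 2 * ν (A ∩ {x | T ≤ f x}) ≤ c := by
    refine (ENNReal.mul_le_mul_iff_right hT₀ hT).1 ?_
    calc T * (2 * ν (A ∩ {x | T ≤ f x}))
        = 2 * (T * ν ({x | T ≤ f x} ∩ A)) := by rw [inter_comm]; ring
      _ ≤ 2 * ∫⁻ x in A, f x ∂ν := by
          gcongr
          exact (mul_le_mul_right (Measure.le_restrict_apply _ _) T).trans
            (mul_meas_ge_le_lintegral₀ hf T)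
      _ ≤ T * c := hint
  have hsplit : ν A ≤ ν (A ∩ {x | f x < T}) + ν (A ∩ {x | T ≤ f x}) := by
    refine (measure_mono fun x hx => ?_).trans (measure_union_le _ _)
    rcases lt_or_ge (f x) T with h | h
    exacts [Or.inl ⟨hx, h⟩, Or.inr ⟨hx, h⟩]
  refine (ENNReal.add_lt_add_iff_right hc.ne_top).1 ?_
  calc c + c < 2 * ν A := by
        rw [← two_mul]; exact ENNReal.mul_lt_mul_right two_ne_zero ofNat_ne_top hc
    _ ≤ 2 * ν (A ∩ {x | f x < T}) + 2 * ν (A ∩ {x | T ≤ f x}) := by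
        rw [← mul_add]; gcongr
    _ ≤ 2 * ν (A ∩ {x | f x < T}) + c := by gcongr

end MeasureLemmas

section NestedFamilies

variable {α ι : Type*}

def nestedCount (P : ι → Set α) (j : ι) (x : α) : ℝ≥0∞ :=
  ∑' i : {i | P i ⊆ P j}, (P i).indicator 1 x

theorem tsum_indicator_one_le_of_nested {β : Type*} [LinearOrder β] {P F : ι → Set α}
    {sz : ι → β} (hnest : ∀ i j, sz i ≤ sz j → ∀ x ∈ P i, x ∈ P j → P i ⊆ P j)
    (hFP : ∀ j, F j ⊆ P j) {T : ℝ≥0∞} (hF : ∀ j, ∀ x ∈ F j, nestedCount P j x < T) (x : α) :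
    ∑' j, (F j).indicator 1 x ≤ T := by
  classical
  refine ENNReal.tsum_eq_iSup_sum ▸ iSup_le fun s => ?_
  obtain ht | ⟨j₀, hj₀, hmax⟩ :=
    (s.filter (x ∈ F ·)).eq_empty_or_nonempty.imp id (Finset.exists_max_image _ sz)
  · rw [Finset.sum_indicator_eq_sum_filter]
    simp [ht]
  · simp only [Finset.mem_filter] at hj₀ hmax
    have hx₀ : x ∈ P j₀ := hFP j₀ hj₀.2
    calc ∑ j ∈ s, (F j).indicator 1 x
        ≤ ∑ j ∈ s, {i | P i ⊆ P j₀}.indicator (fun i => (P i).indicator 1 x) j := by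
          refine Finset.sum_le_sum fun j hj => ?_
          by_cases hxj : x ∈ F j
          · have hsub := hnest j j₀ (hmax j ⟨hj, hxj⟩) x (hFP j hxj) hx₀
            simp [hxj, hsub, hFP j hxj]
          · simp [hxj]
      _ ≤ nestedCount P j₀ x := by
          rw [nestedCount, tsum_subtype _ fun i => (P i).indicator 1 x]
          exact ENNReal.sum_le_tsum s
      _ ≤ T := (hF j₀ x hj₀.2).le

variable [MeasurableSpace α] [Countable ι] {ν : Measure α}

theorem measurable_nestedCount {P : ι → Set α} (hP : ∀ i, MeasurableSet (P i)) (j : ι) :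
    Measurable (nestedCount P j) :=
  Measurable.tsum fun i => measurable_one.indicator (hP i)

theorem setLIntegral_nestedCount {P : ι → Set α} (hP : ∀ i, MeasurableSet (P i)) (j : ι)
    (s : Set α) : ∫⁻ x in s, nestedCount P j x ∂ν = ∑' i : {i | P i ⊆ P j}, ν (P i ∩ s) := by
  simp only [nestedCount]
  rw [lintegral_tsum fun i : {i | P i ⊆ P j} => (measurable_one.indicator (hP i)).aemeasurable]
  refine tsum_congr fun i => ?_
  rw [lintegral_indicator_one (hP i), Measure.restrict_apply (hP i)]

theorem lt_two_mul_measure_inter_setOf_nestedCount_lt {μ C : ℝ≥0∞} (hC₀ : C ≠ 0) (hC : C ≠ ∞)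
    {Q P : ι → Set α} (hP : ∀ i, MeasurableSet (P i)) {E : Set α}
    (hhigh : ∀ i, ν (E ∩ P i) ≤ 2 * μ * ν (Q i)) {j : ι}
    (hback : ∑' i : {i | P i ⊆ P j}, ν (Q i) ≤ C * ν (Q j)) (hlow : μ * ν (Q j) < ν (E ∩ P j)) :
    μ * ν (Q j) < 2 * ν (E ∩ P j ∩ {x | nestedCount P j x < 4 * C}) := by
  refine lt_two_mul_measure_inter_setOf_lt (measurable_nestedCount hP j).aemeasurable
    (mul_ne_zero four_ne_zero hC₀) (ENNReal.mul_ne_top (by simp) hC) hlow ?_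
  calc 2 * ∫⁻ x in E ∩ P j, nestedCount P j x ∂ν
      = 2 * ∑' i : {i | P i ⊆ P j}, ν (P i ∩ (E ∩ P j)) := by
        rw [setLIntegral_nestedCount hP]
    _ ≤ 2 * ∑' i : {i | P i ⊆ P j}, 2 * μ * ν (Q i) := by
        gcongr with i
        exact (measure_mono fun x hx => (⟨hx.2.1, hx.1⟩ : x ∈ E ∩ P i)).trans (hhigh i)
    _ ≤ 2 * (2 * μ * (C * ν (Q j))) := by
        rw [ENNReal.tsum_mul_left]; gcongr
    _ = 4 * C * (μ * ν (Q j)) := by ring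

theorem tsum_setLIntegral_le_of_nested {β : Type*} [LinearOrder β] {p : ℝ} (hp : 0 < p)
    {K μ C : ℝ≥0∞} (hμ₀ : μ ≠ 0) (hμ : μ ≠ ∞) (hC₀ : C ≠ 0) (hC : C ≠ ∞)
    {w v : α → ℝ≥0∞} (hv : Measurable v) {Q P : ι → Set α} (sz : ι → β)
    (hP : ∀ j, MeasurableSet (P j)) (hQ₀ : ∀ j, ν (Q j) ≠ 0) (hQ : ∀ j, ν (Q j) ≠ ∞)
    (hnest : ∀ i j, sz i ≤ sz j → ∀ x ∈ P i, x ∈ P j → P i ⊆ P j)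
    (hback : ∀ j, ∑' i : {i | P i ⊆ P j}, ν (Q i) ≤ C * ν (Q j))
    (hap : ∀ j, ∀ F ⊆ P j, MeasurableSet F →
      ν F / ν (Q j) ≤ K * ((∫⁻ x in F, v x ∂ν) / ∫⁻ x in Q j, w x ∂ν) ^ (1 / p))
    {E : Set α} (hE : MeasurableSet E) (hlow : ∀ j, μ < ν (E ∩ P j) / ν (Q j))
    (hhigh : ∀ j, ν (E ∩ P j) / ν (Q j) ≤ 2 * μ) :
    ∑' j, ∫⁻ x in Q j, w x ∂ν
      ≤ 4 * C * 2 ^ p * K ^ p / μ ^ p * ∫⁻ x in E ∩ ⋃ j, P j, v x ∂ν := by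
  set T := 4 * C
  set F := fun j => E ∩ P j ∩ {x | nestedCount P j x < T}
  have hF : ∀ j, MeasurableSet (F j) := fun j =>
    (hE.inter (hP j)).inter (measurableSet_lt (measurable_nestedCount hP j) measurable_const)
  have hlow' : ∀ j, μ * ν (Q j) < ν (E ∩ P j) := fun j =>
    (ENNReal.lt_div_iff_mul_lt (.inl (hQ₀ j)) (.inl (hQ j))).1 (hlow j)
  have hhigh' : ∀ j, ν (E ∩ P j) ≤ 2 * μ * ν (Q j) := fun j =>
    (ENNReal.div_le_iff_le_mul (.inl (hQ₀ j)) (.inl (hQ j))).1 (hhigh j)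
  have hFbig : ∀ j, μ * ν (Q j) < 2 * ν (F j) := fun j =>
    lt_two_mul_measure_inter_setOf_nestedCount_lt hC₀ hC hP hhigh' (hback j) (hlow' j)
  have hwF : ∀ j, μ ^ p * ∫⁻ x in Q j, w x ∂ν ≤ 2 ^ p * K ^ p * ∫⁻ x in F j, v x ∂ν := by
    refine fun j => ENNReal.rpow_mul_le_of_le_two_mul hp ?_
      (hap j (F j) (fun x hx => hx.1.2) (hF j))
    rw [← mul_div_assoc]
    exact (ENNReal.lt_div_iff_mul_lt (.inl (hQ₀ j)) (.inl (hQ j))).2 (hFbig j) |>.le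
  have hsum : ∑' j, ∫⁻ x in F j, v x ∂ν ≤ T * ∫⁻ x in E ∩ ⋃ j, P j, v x ∂ν :=
    tsum_setLIntegral_le_of_tsum_indicator_le (S := E ∩ ⋃ j, P j) hv.aemeasurable hF
      (fun j x hx => ⟨hx.1.1, mem_iUnion.2 ⟨j, hx.1.2⟩⟩)
      (tsum_indicator_one_le_of_nested hnest (fun j x hx => hx.1.2) (fun j x hx => hx.2))
  have hμp₀ : μ ^ p ≠ 0 := (ENNReal.rpow_pos (pos_iff_ne_zero.2 hμ₀) hμ).ne'
  have hμp : μ ^ p ≠ ∞ := ENNReal.rpow_ne_top_of_nonneg hp.le hμ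
  calc ∑' j, ∫⁻ x in Q j, w x ∂ν = (∑' j, μ ^ p * ∫⁻ x in Q j, w x ∂ν) / μ ^ p := by
        rw [ENNReal.tsum_mul_left, mul_comm, ENNReal.mul_div_cancel_right hμp₀ hμp]
    _ ≤ (∑' j, 2 ^ p * K ^ p * ∫⁻ x in F j, v x ∂ν) / μ ^ p := by
        gcongr ?_ / _; exact ENNReal.tsum_le_tsum hwF
    _ ≤ 2 ^ p * K ^ p * (T * ∫⁻ x in E ∩ ⋃ j, P j, v x ∂ν) / μ ^ p := by
        rw [ENNReal.tsum_mul_left]; gcongr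
    _ = T * 2 ^ p * K ^ p / μ ^ p * ∫⁻ x in E ∩ ⋃ j, P j, v x ∂ν := by
        rw [div_eq_mul_inv, div_eq_mul_inv]; ring

end NestedFamilies

section Cubes

variable {n : ℕ}

theorem measurableSet_cube (a : Fin n → ℝ) (h : ℝ) : MeasurableSet (cube a h) :=
  MeasurableSet.univ_pi fun _ => measurableSet_Ico

theorem volume_cube (a : Fin n → ℝ) (h : ℝ) : volume (cube a h) = ENNReal.ofReal h ^ n := by
  simp [cube, volume_pi_pi, Real.volume_Ico]

theorem cube_subset_cube_two_mul_of_cubePlus_subset {a b : Fin n → ℝ} {h h' : ℝ} (hh : 0 < h)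
    (hsub : cubePlus a h ⊆ cubePlus b h') : cube a h ⊆ cube b (2 * h') := by
  have hcoord : ∀ i, b i + h' ≤ a i + h ∧ a i + 2 * h ≤ b i + 2 * h' := by
    rcases univ_pi_subset_univ_pi_iff.1 hsub with hsub | ⟨i, hi⟩
    · exact fun i => (Ico_subset_Ico_iff (by linarith)).1 (hsub i)
    · exact absurd hi (nonempty_Ico.2 (by linarith)).ne_empty
  intro y hy i _
  obtain ⟨h₁, h₂⟩ := hcoord i
  obtain ⟨h₃, h₄⟩ := hy i trivial
  constructor <;> linarith

theorem dyCubePlus_eq_dyCube (k : ℤ) (m : Fin n → ℤ) : dyCubePlus k m = dyCube k (m + 1) := by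
  simp only [dyCubePlus, dyCube, cubePlus, cube, Pi.add_apply, Pi.one_apply, Int.cast_add,
    Int.cast_one]
  congr! 3 <;> ring

theorem mem_dyCube_iff {k : ℤ} {m : Fin n → ℤ} {x : Fin n → ℝ} :
    x ∈ dyCube k m ↔ ∀ i, ⌊x i / 2 ^ k⌋ = m i := by
  have h2k : (0 : ℝ) < 2 ^ k := zpow_pos two_pos k
  simp only [dyCube, cube, mem_univ_pi, mem_Ico, Int.floor_eq_iff, le_div_iff₀ h2k,
    div_lt_iff₀ h2k, add_mul, one_mul]

theorem floor_div_two_zpow_add (t : ℝ) (k : ℤ) (d : ℕ) :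
    ⌊t / 2 ^ (k + d)⌋ = ⌊t / 2 ^ k⌋ / 2 ^ d := by
  rw [zpow_add₀ two_ne_zero, zpow_natCast, ← div_div]
  exact_mod_cast Int.floor_div_natCast (t / 2 ^ k) (2 ^ d)

theorem dyCube_subset_of_le {k k' : ℤ} {m m' : Fin n → ℤ} (hk : k ≤ k') {x : Fin n → ℝ}
    (hx : x ∈ dyCube k m) (hx' : x ∈ dyCube k' m') : dyCube k m ⊆ dyCube k' m' := by
  obtain ⟨d, rfl⟩ : ∃ d : ℕ, k' = k + d := ⟨(k' - k).toNat, by omega⟩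
  intro y hy
  rw [mem_dyCube_iff] at hx hx' hy ⊢
  intro i
  rw [← hx' i, floor_div_two_zpow_add, floor_div_two_zpow_add, hx i, hy i]

theorem dyCubePlus_subset_of_le {k k' : ℤ} {m m' : Fin n → ℤ} (hk : k ≤ k') {x : Fin n → ℝ}
    (hx : x ∈ dyCubePlus k m) (hx' : x ∈ dyCubePlus k' m') :
    dyCubePlus k m ⊆ dyCubePlus k' m' := by
  simp only [dyCubePlus_eq_dyCube] at hx hx' ⊢
  exact dyCube_subset_of_le hk hx hx'

theorem volume_dyCube (k : ℤ) (m : Fin n → ℤ) :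
    volume (dyCube k m) = ENNReal.ofReal (2 ^ k) ^ n :=
  volume_cube _ _

theorem tsum_volume_dyCube_le {ι : Type*} {k : ι → ℤ} {m : ι → Fin n → ℤ}
    (hdisj : Pairwise fun i j => Disjoint (dyCube (k i) (m i)) (dyCube (k j) (m j))) (j : ι) :
    ∑' i : {i | dyCubePlus (k i) (m i) ⊆ dyCubePlus (k j) (m j)}, volume (dyCube (k i) (m i))
      ≤ 2 ^ n * volume (dyCube (k j) (m j)) := by
  calc _ ≤ volume (cube (fun t => (m j t : ℝ) * 2 ^ k j) (2 * 2 ^ k j)) :=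
        tsum_measure_le_of_pairwise_disjoint (fun i => measurableSet_cube _ _) hdisj
          fun i hi => cube_subset_cube_two_mul_of_cubePlus_subset (zpow_pos two_pos _) hi
    _ = 2 ^ n * volume (dyCube (k j) (m j)) := by
        rw [volume_cube, volume_dyCube, ENNReal.ofReal_mul zero_le_two, mul_pow]
        norm_num

end Cubes

theorem sum_w_Qj_le_general {n : ℕ} (p K μ : ℝ) (hp : 1 ≤ p) (hμ : 0 < μ)
    (w v : (Fin n → ℝ) → ℝ≥0∞) (hv : Measurable v)
    (hApd : ∀ (k : ℤ) (m : Fin n → ℤ), ∀ F ⊆ dyCubePlus k m, MeasurableSet F →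
      volume F / volume (dyCube k m)
        ≤ ENNReal.ofReal K *
          ((∫⁻ x in F, v x) / ∫⁻ x in dyCube k m, w x) ^ (1 / p))
    (E : Set (Fin n → ℝ)) (hE : MeasurableSet E)
    {ι : Type*} [Countable ι] (k : ι → ℤ) (m : ι → Fin n → ℤ)
    (hdisj : Pairwise fun i j => Disjoint (dyCube (k i) (m i)) (dyCube (k j) (m j)))
    (hlow : ∀ j, ENNReal.ofReal μ
      < volume (E ∩ dyCubePlus (k j) (m j)) / volume (dyCube (k j) (m j)))
    (hhigh : ∀ j, volume (E ∩ dyCubePlus (k j) (m j)) / volume (dyCube (k j) (m j))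
      ≤ 2 * ENNReal.ofReal μ) :
    ∑' j, ∫⁻ x in dyCube (k j) (m j), w x
      ≤ ENNReal.ofReal (2 ^ ((n : ℝ) + p + 2)) * ENNReal.ofReal K ^ p
          / ENNReal.ofReal μ ^ p *
        ∫⁻ x in E ∩ ⋃ j, dyCubePlus (k j) (m j), v x := by
  have hconst : ENNReal.ofReal (2 ^ ((n : ℝ) + p + 2)) = 4 * 2 ^ n * 2 ^ p := by
    rw [← ENNReal.ofReal_rpow_of_pos two_pos, ENNReal.ofReal_ofNat,
      ENNReal.rpow_add _ _ two_ne_zero ofNat_ne_top, ENNReal.rpow_add _ _ two_ne_zero ofNat_ne_top,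
      ENNReal.rpow_natCast, ENNReal.rpow_two]
    ring
  rw [hconst]
  exact tsum_setLIntegral_le_of_nested (by linarith) (ENNReal.ofReal_pos.2 hμ).ne' ofReal_ne_top
    (by simp) (by simp) hv k
    (fun j => dyCubePlus_eq_dyCube (k j) (m j) ▸ measurableSet_cube _ _)
    (fun j => by simp [volume_dyCube, (zpow_pos (two_pos : (0 : ℝ) < 2) (k j)).not_ge])
    (fun j => by simp [volume_dyCube])
    (fun i j hk x hi hj => dyCubePlus_subset_of_le hk hi hj) (tsum_volume_dyCube_le hdisj)
    (fun j => hApd (k j) (m j)) hE hlow hhigh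

/-- Lemma 3.1: if `(w,v) ∈ A_p^{+,d}(𝓡)` with constant `K`, `μ > 0`, and `{Q_j}` is a
pairwise disjoint family of dyadic cubes with `μ < |E ∩ Q_j⁺|/|Q_j| ≤ 2μ`, then
`∑_j w(Q_j) ≤ 2^(n+p+2) K^p μ⁻ᵖ v(E ∩ ⋃_j Q_j⁺)`. -/
theorem sum_w_Qj_le {n : ℕ} (p K μ : ℝ) (hp : 1 ≤ p) (hK : 0 ≤ K) (hμ : 0 < μ)
    (w v : (Fin n → ℝ) → ℝ≥0∞) (hw : Measurable w) (hv : Measurable v)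
    (hApd : ∀ (k : ℤ) (m : Fin n → ℤ), ∀ F ⊆ dyCubePlus k m, MeasurableSet F →
      volume F / volume (dyCube k m)
        ≤ ENNReal.ofReal K *
          ((∫⁻ x in F, v x) / ∫⁻ x in dyCube k m, w x) ^ (1 / p))
    (E : Set (Fin n → ℝ)) (hE : MeasurableSet E)
    (hE0 : 0 < volume E) (hEfin : volume E < ∞)
    {ι : Type*} [Countable ι] (k : ι → ℤ) (m : ι → Fin n → ℤ)
    (hdisj : Pairwise fun i j => Disjoint (dyCube (k i) (m i)) (dyCube (k j) (m j)))
    (hlow : ∀ j, ENNReal.ofReal μ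
      < volume (E ∩ dyCubePlus (k j) (m j)) / volume (dyCube (k j) (m j)))
    (hhigh : ∀ j, volume (E ∩ dyCubePlus (k j) (m j)) / volume (dyCube (k j) (m j))
      ≤ 2 * ENNReal.ofReal μ) :
    ∑' j, ∫⁻ x in dyCube (k j) (m j), w x
      ≤ ENNReal.ofReal (2 ^ ((n : ℝ) + p + 2)) * ENNReal.ofReal K ^ p
          / ENNReal.ofReal μ ^ p *
        ∫⁻ x in E ∩ ⋃ j, dyCubePlus (k j) (m j), v x :=
  sum_w_Qj_le_general p K μ hp hμ w v hv hApd E hE k m hdisj hlow hhigh
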